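/- arXiv:1902.07315 — 3 statements merged into one kernel-verified Lean document; each statement's English description precedes it below -/
import Mathlib

section
/- For every integer k ≥ 1 and every u ∈ (0,1), lim_{t→0⁺} sup_{ξ∈ℝ} (1+|ξ|)^{k−u} |∂_ξ^k e^{−tξ²}| = 0. -/
open Real Filter Polynomial

lemma pow_mul_exp_half_le (n : ℕ) (y : ℝ) :
    |y| ^ n * Real.exp (-(y ^ 2 / 2)) ≤ 2 ^ n * n.factorial + 1 := by
  have hfac : (1:ℝ) ≤ n.factorial := by exact_mod_cast Nat.one_le_iff_ne_zero.mpr n.factorial_ne_zero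
  rcases le_or_gt (|y|) 1 with h | h
  · have h1 : |y| ^ n ≤ 1 := pow_le_one₀ (abs_nonneg y) h
    have h2 : Real.exp (-(y ^ 2 / 2)) ≤ 1 := by
      rw [Real.exp_le_one_iff]
      nlinarith [sq_nonneg y]
    nlinarith [Real.exp_pos (-(y ^ 2 / 2)), pow_nonneg (abs_nonneg y) n,
      one_le_pow₀ (le_refl (1:ℝ)) (n := n), pow_pos (zero_lt_two (α := ℝ)) n]
  · have hy2 : |y| ≤ y ^ 2 := by nlinarith [sq_abs y]
    have h1 : |y| ^ n ≤ (y ^ 2) ^ n := pow_le_pow_left₀ (abs_nonneg y) hy2 n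
    have hx : (0:ℝ) ≤ y ^ 2 / 2 := by positivity
    have h2 : (y ^ 2 / 2) ^ n / n.factorial ≤ Real.exp (y ^ 2 / 2) := by
      calc (y ^ 2 / 2) ^ n / n.factorial
          ≤ ∑ i ∈ Finset.range (n+1), (y ^ 2 / 2) ^ i / i.factorial := by
            exact Finset.single_le_sum (f := fun i => (y ^ 2 / 2) ^ i / (i.factorial : ℝ))
              (fun i _ => by positivity) (Finset.self_mem_range_succ n)
        _ ≤ Real.exp (y ^ 2 / 2) := Real.sum_le_exp_of_nonneg hx _
    have h3 : (y ^ 2) ^ n ≤ 2 ^ n * n.factorial * Real.exp (y ^ 2 / 2) := by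
      have := (div_le_iff₀ (by positivity : (0:ℝ) < (n.factorial : ℝ))).mp h2
      calc (y ^ 2) ^ n = 2 ^ n * (y ^ 2 / 2) ^ n := by
            rw [← mul_pow]; ring_nf
        _ ≤ 2 ^ n * (Real.exp (y ^ 2 / 2) * n.factorial) := by
            apply mul_le_mul_of_nonneg_left this (by positivity)
        _ = 2 ^ n * n.factorial * Real.exp (y ^ 2 / 2) := by ring
    have h4 : |y| ^ n * Real.exp (-(y ^ 2 / 2)) ≤ 2 ^ n * n.factorial := by
      rw [Real.exp_neg]
      rw [mul_inv_le_iff₀ (Real.exp_pos _)]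
      exact le_trans h1 h3
    linarith

lemma poly_gauss_bound (Q : Polynomial ℝ) :
    ∃ C : ℝ, ∀ z : ℝ, |Q.eval z| * Real.exp (-(z ^ 2 / 2)) ≤ C := by
  induction Q using Polynomial.induction_on' with
  | monomial n c =>
    refine ⟨|c| * (2 ^ n * n.factorial + 1), fun z => ?_⟩
    rw [Polynomial.eval_monomial, abs_mul, abs_pow, mul_assoc]
    exact mul_le_mul_of_nonneg_left (pow_mul_exp_half_le n z) (abs_nonneg c)
  | add p q hp hq =>
    obtain ⟨C₁, h₁⟩ := hp
    obtain ⟨C₂, h₂⟩ := hq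
    refine ⟨C₁ + C₂, fun z => ?_⟩
    have : |(p + q).eval z| ≤ |p.eval z| + |q.eval z| := by
      rw [Polynomial.eval_add]; exact abs_add_le _ _
    calc |(p + q).eval z| * Real.exp (-(z ^ 2 / 2))
        ≤ (|p.eval z| + |q.eval z|) * Real.exp (-(z ^ 2 / 2)) :=
          mul_le_mul_of_nonneg_right this (Real.exp_pos _).le
      _ = |p.eval z| * Real.exp (-(z ^ 2 / 2)) + |q.eval z| * Real.exp (-(z ^ 2 / 2)) := by ring
      _ ≤ C₁ + C₂ := add_le_add (h₁ z) (h₂ z)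

lemma contDiff_gauss_half : ContDiff ℝ (⊤ : ℕ∞) (fun x : ℝ => Real.exp (-(x ^ 2 / 2))) :=
  Real.contDiff_exp.comp (((contDiff_id.pow 2).div_const 2).neg)

lemma iteratedDeriv_gauss (k : ℕ) (y : ℝ) :
    iteratedDeriv k (fun x : ℝ => Real.exp (-(x ^ 2))) y
      = (Real.sqrt 2) ^ k * ((-1 : ℝ) ^ k *
          (Polynomial.aeval (Real.sqrt 2 * y) (Polynomial.hermite k)) * Real.exp (-(y ^ 2))) := by
  have hsq : (Real.sqrt 2) ^ 2 = 2 := Real.sq_sqrt (by norm_num)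
  have hfe : (fun x : ℝ => Real.exp (-(x ^ 2)))
      = (fun x : ℝ => (fun z : ℝ => Real.exp (-(z ^ 2 / 2))) (Real.sqrt 2 * x)) := by
    funext x
    simp only []
    rw [mul_pow, hsq]
    ring_nf
  rw [hfe, iteratedDeriv_comp_const_mul (contDiff_gauss_half.of_le (mod_cast le_top)) (Real.sqrt 2)]
  simp only [iteratedDeriv_eq_iterate]
  rw [Polynomial.deriv_gaussian_eq_hermite_mul_gaussian]
  rw [mul_pow, hsq]
  ring_nf

lemma gauss_deriv_bound (k : ℕ) :
    ∃ C : ℝ, 0 ≤ C ∧ ∀ y : ℝ,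
      (1 + |y|) ^ k * |iteratedDeriv k (fun x : ℝ => Real.exp (-(x ^ 2))) y| ≤ C := by
  set P : Polynomial ℝ := (Polynomial.hermite k).map (Int.castRingHom ℝ) with hP
  obtain ⟨C, hC⟩ := poly_gauss_bound ((1 + Polynomial.X ^ 2) ^ k * P)
  have hC0 : 0 ≤ C := le_trans (by positivity) (hC 0)
  refine ⟨(Real.sqrt 2) ^ k * 2 ^ k * C, by positivity, fun y => ?_⟩
  set z : ℝ := Real.sqrt 2 * y with hz
  have hs1 : (1 : ℝ) ≤ Real.sqrt 2 := by
    rw [show (1:ℝ) = Real.sqrt 1 by simp]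
    exact Real.sqrt_le_sqrt (by norm_num)
  have hyz : |y| ≤ |z| := by
    rw [hz, abs_mul, abs_of_nonneg (by positivity : (0:ℝ) ≤ Real.sqrt 2)]
    nlinarith [abs_nonneg y]
  have hzz : z ^ 2 = 2 * y ^ 2 := by
    rw [hz, mul_pow, Real.sq_sqrt (by norm_num : (0:ℝ) ≤ 2)]
  have haev : (Polynomial.aeval z (Polynomial.hermite k)) = P.eval z := by
    rw [hP, Polynomial.eval_map, Polynomial.aeval_def]
    rfl
  have habs : |iteratedDeriv k (fun x : ℝ => Real.exp (-(x ^ 2))) y|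
      = (Real.sqrt 2) ^ k * (|P.eval z| * Real.exp (-(z ^ 2 / 2))) := by
    rw [iteratedDeriv_gauss, haev]
    rw [abs_mul, abs_mul, abs_mul, abs_pow, abs_pow, abs_neg, abs_one, one_pow, one_mul,
      abs_of_nonneg (by positivity : (0:ℝ) ≤ Real.sqrt 2),
      abs_of_nonneg (Real.exp_pos _).le]
    rw [hzz]
    ring_nf
  -- (1+|y|)^k ≤ 2^k (1+z^2)^k
  have h1 : (1 + |y|) ^ k ≤ 2 ^ k * (1 + z ^ 2) ^ k := by
    rw [← mul_pow]
    apply pow_le_pow_left₀ (by positivity)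
    nlinarith [sq_abs z, sq_nonneg (|z| - 1), abs_nonneg z]
  have h2 : |((1 + Polynomial.X ^ 2) ^ k * P).eval z| = (1 + z ^ 2) ^ k * |P.eval z| := by
    rw [Polynomial.eval_mul, abs_mul, Polynomial.eval_pow, Polynomial.eval_add,
      Polynomial.eval_one, Polynomial.eval_pow, Polynomial.eval_X, abs_pow,
      abs_of_nonneg (by positivity : (0:ℝ) ≤ 1 + z ^ 2)]
  calc (1 + |y|) ^ k * |iteratedDeriv k (fun x : ℝ => Real.exp (-(x ^ 2))) y|
      = (1 + |y|) ^ k * ((Real.sqrt 2) ^ k * (|P.eval z| * Real.exp (-(z ^ 2 / 2)))) := by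
        rw [habs]
    _ ≤ (2 ^ k * (1 + z ^ 2) ^ k) * ((Real.sqrt 2) ^ k * (|P.eval z| * Real.exp (-(z ^ 2 / 2)))) := by
        apply mul_le_mul_of_nonneg_right h1 (by positivity)
    _ = (Real.sqrt 2) ^ k * 2 ^ k * (((1 + z ^ 2) ^ k * |P.eval z|) * Real.exp (-(z ^ 2 / 2))) := by
        ring
    _ ≤ (Real.sqrt 2) ^ k * 2 ^ k * C := by
        apply mul_le_mul_of_nonneg_left _ (by positivity)
        rw [← h2]
        exact hC z

/-- For every integer `k ≥ 1` and every `u ∈ (0,1)`,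
`lim_{t→0⁺} sup_{ξ∈ℝ} (1+|ξ|)^(k−u) * |∂_ξ^k exp (−tξ²)| = 0`. -/
theorem stmt5 (k : ℕ) (hk : 1 ≤ k) (u : ℝ) (hu : u ∈ Set.Ioo (0 : ℝ) 1) :
    Filter.Tendsto
      (fun t : ℝ => ⨆ ξ : ℝ, (1 + |ξ|) ^ ((k : ℝ) - u) *
        |iteratedDeriv k (fun x : ℝ => Real.exp (-t * x ^ 2)) ξ|)
      (nhdsWithin 0 (Set.Ioi 0)) (nhds 0) := by
  obtain ⟨hu0, hu1⟩ := hu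
  obtain ⟨C, hC0, hC⟩ := gauss_deriv_bound k
  have hk1 : (1:ℝ) ≤ (k:ℝ) := by exact_mod_cast hk
  have ha0 : 0 ≤ (k:ℝ) - u := by linarith
  set g : ℝ → ℝ := fun x => Real.exp (-(x ^ 2)) with hg
  have hgc : ContDiff ℝ (k : ℕ) g :=
    (Real.contDiff_exp.comp ((contDiff_id.pow 2).neg) : ContDiff ℝ (⊤ : ℕ∞) g).of_le (mod_cast le_top)
  have key : ∀ t ∈ Set.Ioo (0:ℝ) 1, ∀ ξ : ℝ,
      (1 + |ξ|) ^ ((k:ℝ) - u) * |iteratedDeriv k (fun x : ℝ => Real.exp (-t * x ^ 2)) ξ|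
        ≤ C * Real.sqrt t ^ u := by
    rintro t ⟨ht0, ht1⟩ ξ
    set s : ℝ := Real.sqrt t with hs
    have hs0 : 0 < s := Real.sqrt_pos.mpr ht0
    have hs1 : s ≤ 1 := by
      rw [hs, show (1:ℝ) = Real.sqrt 1 by simp]
      exact Real.sqrt_le_sqrt ht1.le
    have hfe : (fun x : ℝ => Real.exp (-t * x ^ 2)) = fun x => g (s * x) := by
      funext x
      rw [hg]
      simp only []
      rw [mul_pow, hs, Real.sq_sqrt ht0.le]
      ring_nf
    rw [hfe, iteratedDeriv_comp_const_mul hgc s]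
    have habs : |s ^ k * iteratedDeriv k g (s * ξ)| = s ^ k * |iteratedDeriv k g (s * ξ)| := by
      rw [abs_mul, abs_pow, abs_of_pos hs0]
    rw [habs]
    have hb : (1:ℝ) ≤ 1 + |s * ξ| := by
      nlinarith [abs_nonneg (s * ξ)]
    have step1 : 1 + |ξ| ≤ (1 + |s * ξ|) / s := by
      rw [le_div_iff₀ hs0]
      have : |s * ξ| = s * |ξ| := by rw [abs_mul, abs_of_pos hs0]
      nlinarith [abs_nonneg ξ]
    have step2 : (1 + |ξ|) ^ ((k:ℝ) - u) ≤ (1 + |s * ξ|) ^ ((k:ℝ) - u) / s ^ ((k:ℝ) - u) := by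
      rw [← Real.div_rpow (by linarith) hs0.le]
      exact Real.rpow_le_rpow (by positivity) step1 ha0
    have step4 : (1 + |s * ξ|) ^ ((k:ℝ) - u) ≤ (1 + |s * ξ|) ^ (k : ℕ) := by
      rw [← Real.rpow_natCast (1 + |s * ξ|) k]
      exact Real.rpow_le_rpow_of_exponent_le hb (by linarith)
    have hpow : s ^ k / s ^ ((k:ℝ) - u) = s ^ u := by
      rw [← Real.rpow_natCast s k, ← Real.rpow_sub hs0]
      norm_num
    calc (1 + |ξ|) ^ ((k:ℝ) - u) * (s ^ k * |iteratedDeriv k g (s * ξ)|)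
        ≤ ((1 + |s * ξ|) ^ ((k:ℝ) - u) / s ^ ((k:ℝ) - u)) * (s ^ k * |iteratedDeriv k g (s * ξ)|) := by
          apply mul_le_mul_of_nonneg_right step2 (by positivity)
      _ = ((1 + |s * ξ|) ^ ((k:ℝ) - u) * |iteratedDeriv k g (s * ξ)|) * (s ^ k / s ^ ((k:ℝ) - u)) := by
          ring
      _ ≤ ((1 + |s * ξ|) ^ (k : ℕ) * |iteratedDeriv k g (s * ξ)|) * (s ^ k / s ^ ((k:ℝ) - u)) := by
          apply mul_le_mul_of_nonneg_right
            (mul_le_mul_of_nonneg_right step4 (abs_nonneg _)) (by positivity)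
      _ ≤ C * (s ^ k / s ^ ((k:ℝ) - u)) := by
          apply mul_le_mul_of_nonneg_right (hC (s * ξ)) (by positivity)
      _ = C * s ^ u := by rw [hpow]
  have hev : Set.Ioo (0:ℝ) 1 ∈ nhdsWithin (0:ℝ) (Set.Ioi 0) :=
    Ioo_mem_nhdsGT_of_mem ⟨le_refl 0, one_pos⟩
  apply squeeze_zero'
  · filter_upwards with t
    exact Real.iSup_nonneg fun ξ => by positivity
  · filter_upwards [hev] with t ht
    exact ciSup_le (key t ht)
  · have h1 : Filter.Tendsto Real.sqrt (nhdsWithin (0:ℝ) (Set.Ioi 0)) (nhds 0) :=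
      (Real.continuous_sqrt.tendsto' 0 0 (by simp)).mono_left nhdsWithin_le_nhds
    have h2 : ContinuousAt (fun x : ℝ => x ^ u) 0 :=
      Real.continuousAt_rpow_const 0 u (Or.inr hu0.le)
    have h3 : Filter.Tendsto (fun t : ℝ => Real.sqrt t ^ u)
        (nhdsWithin (0:ℝ) (Set.Ioi 0)) (nhds 0) := by
      have := h2.tendsto.comp h1
      simpa [Real.zero_rpow hu0.ne', Function.comp_def] using this
    simpa using h3.const_mul C
end

section
/- Let p ≥ 1 be an integer and (λ_k)_{k∈ℕ} a sequence of positive real numbers with Σ_k λ_k^{−p} < ∞, and set λ₀ = inf_k λ_k > 0. Then for every z ∈ ℂ with |z| < λ₀, Π_k [(1 + z/λ_k) exp( Σ_{n=1}^{p−1} (−1)^n n^{−1} (z/λ_k)^n )] = exp( Σ_{n=p}^{∞} (−1)^{n+1} n^{−1} z^n · (Σ_k λ_k^{−n}) ), where all the series involved converge absolutely. -/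
/-!
For `‖w‖ < 1` the Taylor series of `log (1 + w)` shows that
`(1 + w) exp (∑_{n=1}^{p-1} (-1)^n w^n / n)` is the exponential of the tail `∑_{n ≥ p}` of that
series. Taking `w = z / λ_k`, the product over `k` becomes the exponential of a double series in
`(n, k)`, which converges absolutely because `λ_k^{-n} ≤ λ₀^{-(n-p)} λ_k^{-p}` and `|z| < λ₀`;
summing it first over `k` produces the traces `∑_k λ_k^{-n}`.
-/

open Complex Finset

noncomputable def logTerm (n : ℕ) (w : ℂ) : ℂ := (-1) ^ (n + 1) * (n : ℂ)⁻¹ * w ^ n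

/-- `Tr (A ^ n)` for an operator `A` with eigenvalues `(lam k)⁻¹`. -/
noncomputable def spectralTrace {ι : Type*} (lam : ι → ℝ) (n : ℕ) : ℝ :=
  ∑' k, lam k ^ (-(n : ℤ))

lemma norm_logTerm (n : ℕ) (w : ℂ) : ‖logTerm n w‖ = (n : ℝ)⁻¹ * ‖w‖ ^ n := by
  simp [logTerm]

lemma hasSum_subtype_le_iff {G : Type*} [AddCommGroup G] [TopologicalSpace G]
    [IsTopologicalAddGroup G] {f : ℕ → G} {a : G} (p : ℕ) :
    HasSum (fun n : {n : ℕ // p ≤ n} => f n) (a - ∑ i ∈ range p, f i) ↔ HasSum f a := by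
  conv_rhs => rw [← sub_add_cancel a (∑ i ∈ range p, f i), ← (range p).hasSum_compl_iff]
  exact ((Equiv.subtypeEquivRight fun n => by simp :
    {n // n ∉ range p} ≃ {n // p ≤ n}).hasSum_iff (f := fun n : {n // p ≤ n} => f n)).symm

lemma sum_range_logTerm (p : ℕ) (w : ℂ) :
    ∑ n ∈ range p, logTerm n w = -∑ n ∈ Icc 1 (p - 1), (-1 : ℂ) ^ n * (n : ℂ)⁻¹ * w ^ n := by
  rw [← sum_neg_distrib]
  refine (sum_subset (fun n hn => ?_) fun n hnp hn => ?_).symm.trans (sum_congr rfl fun n _ => ?_)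
  · simp only [mem_Icc, mem_range] at hn ⊢
    omega
  · obtain rfl : n = 0 := by
      simp only [mem_Icc, mem_range] at hnp hn
      omega
    simp [logTerm]
  · simp only [logTerm, pow_succ]
    ring

lemma one_add_mul_exp_sum_Icc {w : ℂ} (hw : ‖w‖ < 1) (p : ℕ) :
    (1 + w) * cexp (∑ n ∈ Icc 1 (p - 1), (-1 : ℂ) ^ n * (n : ℂ)⁻¹ * w ^ n)
      = cexp (∑' n : {n : ℕ // p ≤ n}, logTerm n w) := by
  have hlog : HasSum (fun n => logTerm n w) (log (1 + w)) := by
    convert hasSum_taylorSeries_log hw using 2 with n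
    simp only [logTerm]
    ring
  have hw' : 1 + w ≠ 0 := by
    intro h
    simp [eq_neg_of_add_eq_zero_right h] at hw
  rw [((hasSum_subtype_le_iff p).2 hlog).tsum_eq, exp_sub, exp_log hw', sum_range_logTerm,
    exp_neg, div_inv_eq_mul]

section SpectralSequence

variable {ι : Type*} {lam : ι → ℝ} {c : ℝ} {p n : ℕ}

lemma zpow_neg_le_of_le {x : ℝ} (hc : 0 < c) (hcx : c ≤ x) (hpn : p ≤ n) :
    x ^ (-(n : ℤ)) ≤ (c ^ (n - p))⁻¹ * x ^ (-(p : ℤ)) := by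
  have hx : 0 < x := hc.trans_le hcx
  have hsplit : x ^ (-(n : ℤ)) = (x ^ (n - p))⁻¹ * x ^ (-(p : ℤ)) := by
    rw [← zpow_natCast, ← zpow_neg, ← zpow_add₀ hx.ne']
    congr 1
    omega
  rw [hsplit]
  gcongr

lemma spectralTrace_nonneg (hc : 0 < c) (hle : ∀ k, c ≤ lam k) (n : ℕ) :
    0 ≤ spectralTrace lam n :=
  tsum_nonneg fun k => zpow_nonneg (hc.trans_le (hle k)).le _

variable (hc : 0 < c) (hle : ∀ k, c ≤ lam k) (hsum : Summable fun k => lam k ^ (-(p : ℤ)))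
include hc hle hsum

lemma summable_zpow_neg_of_le (hpn : p ≤ n) : Summable fun k => lam k ^ (-(n : ℤ)) :=
  (hsum.mul_left _).of_nonneg_of_le (fun k => zpow_nonneg (hc.trans_le (hle k)).le _)
    fun k => zpow_neg_le_of_le hc (hle k) hpn

lemma spectralTrace_le (hpn : p ≤ n) :
    spectralTrace lam n ≤ (c ^ (n - p))⁻¹ * spectralTrace lam p := by
  rw [spectralTrace, spectralTrace, ← tsum_mul_left]
  exact (summable_zpow_neg_of_le hc hle hsum hpn).tsum_le_tsum
    (fun k => zpow_neg_le_of_le hc (hle k) hpn) (hsum.mul_left _)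

lemma summable_norm_logTerm_mul_spectralTrace {z : ℂ} (hz : ‖z‖ < c) :
    Summable fun n : {n : ℕ // p ≤ n} => ‖logTerm n z * (spectralTrace lam n : ℂ)‖ := by
  have hgeom := ((summable_geometric_of_lt_one (by positivity) ((div_lt_one hc).2 hz)).mul_left
    (c ^ p * spectralTrace lam p)).subtype {n | p ≤ n}
  refine hgeom.of_nonneg_of_le (fun _ => norm_nonneg _) fun ⟨n, hpn⟩ => ?_
  have hcpow : (c ^ (n - p))⁻¹ = c ^ p / c ^ n := by rw [pow_sub₀ c hc.ne' hpn]; field_simp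
  calc ‖logTerm n z * (spectralTrace lam n : ℂ)‖
      = (n : ℝ)⁻¹ * ‖z‖ ^ n * spectralTrace lam n := by
        rw [norm_mul, norm_logTerm, norm_real, Real.norm_of_nonneg (spectralTrace_nonneg hc hle n)]
    _ ≤ 1 * ‖z‖ ^ n * ((c ^ (n - p))⁻¹ * spectralTrace lam p) := by
        gcongr
        exacts [spectralTrace_nonneg hc hle n, Nat.cast_inv_le_one n,
          spectralTrace_le hc hle hsum hpn]
    _ = c ^ p * spectralTrace lam p * (‖z‖ / c) ^ n := by
        rw [hcpow, div_pow]
        ring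

lemma summable_logTerm_div {z : ℂ} (hz : ‖z‖ < c) :
    Summable fun x : {n : ℕ // p ≤ n} × ι => logTerm x.1 (z / lam x.2) := by
  have hnorm : ∀ (n : ℕ) k,
      ‖logTerm n (z / lam k)‖ = (n : ℝ)⁻¹ * ‖z‖ ^ n * lam k ^ (-(n : ℤ)) := fun n k => by
      rw [norm_logTerm, norm_div, norm_real, Real.norm_of_nonneg (hc.trans_le (hle k)).le, div_pow,
        zpow_neg, zpow_natCast, div_eq_mul_inv, mul_assoc]
  refine Summable.of_norm ((summable_prod_of_nonneg fun _ => norm_nonneg _).2 ⟨fun n => ?_, ?_⟩)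
  · simp only [hnorm]
    exact (summable_zpow_neg_of_le hc hle hsum n.2).mul_left _
  · refine (summable_norm_logTerm_mul_spectralTrace hc hle hsum hz).congr fun n => ?_
    rw [tsum_congr (hnorm n), tsum_mul_left, norm_mul, norm_logTerm, norm_real,
      Real.norm_of_nonneg (spectralTrace_nonneg hc hle n)]
    rfl

end SpectralSequence

lemma tsum_logTerm_div {ι : Type*} (lam : ι → ℝ) (z : ℂ) (n : ℕ) :
    ∑' k, logTerm n (z / lam k) = logTerm n z * (spectralTrace lam n : ℂ) := by
  simp only [spectralTrace, ofReal_tsum, ← tsum_mul_left, logTerm, zpow_neg,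
    zpow_natCast, div_eq_mul_inv, mul_pow, inv_pow, mul_assoc, ofReal_inv, ofReal_pow]

theorem stmt7_general (p : ℕ) (lam : ℕ → ℝ) (hpos : ∀ k, 0 < lam k)
    (hsum : Summable fun k => (lam k) ^ (-(p : ℤ))) :
    ∀ z : ℂ, ‖z‖ < ⨅ k, lam k →
      (∀ n : ℕ, p ≤ n → Summable fun k => (lam k) ^ (-(n : ℤ))) ∧
      Summable (fun n : {n : ℕ // p ≤ n} =>
        ‖((-1 : ℂ) ^ ((n : ℕ) + 1) * ((n : ℕ) : ℂ)⁻¹ * z ^ (n : ℕ) *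
          ((∑' k, (lam k) ^ (-((n : ℕ) : ℤ)) : ℝ) : ℂ))‖) ∧
      (∏' k, (1 + z / (lam k : ℂ)) *
          Complex.exp (∑ n ∈ Finset.Icc 1 (p - 1), (-1 : ℂ) ^ n * (n : ℂ)⁻¹ * (z / (lam k : ℂ)) ^ n))
        = Complex.exp (∑' n : {n : ℕ // p ≤ n},
            (-1 : ℂ) ^ ((n : ℕ) + 1) * ((n : ℕ) : ℂ)⁻¹ * z ^ (n : ℕ) *
              ((∑' k, (lam k) ^ (-((n : ℕ) : ℤ)) : ℝ) : ℂ)) := by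
  intro z hz
  have hle : ∀ k, ⨅ k, lam k ≤ lam k := ciInf_le ⟨0, by rintro _ ⟨k, rfl⟩; exact (hpos k).le⟩
  have hc : 0 < ⨅ k, lam k := (norm_nonneg z).trans_lt hz
  refine ⟨fun n => summable_zpow_neg_of_le hc hle hsum,
    summable_norm_logTerm_mul_spectralTrace hc hle hsum hz, ?_⟩
  have hw : ∀ k, ‖z / lam k‖ < 1 := fun k => by
    rw [norm_div, norm_real, Real.norm_of_nonneg (hpos k).le, div_lt_one (hpos k)]
    exact hz.trans_le (hle k)
  have hF := summable_logTerm_div hc hle hsum hz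
  calc _ = ∏' k, cexp (∑' n : {n : ℕ // p ≤ n}, logTerm n (z / lam k)) :=
        tprod_congr fun k => one_add_mul_exp_sum_Icc (hw k) p
    _ = cexp (∑' k, ∑' n : {n : ℕ // p ≤ n}, logTerm n (z / lam k)) :=
        hF.prod_symm.prod.hasSum.cexp.tprod_eq
    _ = cexp (∑' n : {n : ℕ // p ≤ n}, ∑' k, logTerm n (z / lam k)) :=
        congrArg cexp <|
          hF.tsum_comm (f := fun (n : {n : ℕ // p ≤ n}) k => logTerm n (z / lam k))
    _ = _ := by simp only [tsum_logTerm_div]; rfl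

/-- Let `p ≥ 1` be an integer and `(λ_k)` a sequence of positive reals with
`Σ_k λ_k^(−p) < ∞`, and set `λ₀ = inf_k λ_k > 0`. Then for every `z ∈ ℂ` with `|z| < λ₀`,
`Π_k [(1 + z/λ_k) exp (Σ_{n=1}^{p−1} (−1)^n n⁻¹ (z/λ_k)^n)]
  = exp (Σ_{n=p}^∞ (−1)^{n+1} n⁻¹ z^n (Σ_k λ_k^{−n}))`,
where all the series involved converge absolutely. -/
theorem stmt7 (p : ℕ) (hp : 1 ≤ p) (lam : ℕ → ℝ) (hpos : ∀ k, 0 < lam k)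
    (hsum : Summable fun k => (lam k) ^ (-(p : ℤ)))
    (hinf : 0 < ⨅ k, lam k) :
    ∀ z : ℂ, ‖z‖ < ⨅ k, lam k →
      (∀ n : ℕ, p ≤ n → Summable fun k => (lam k) ^ (-(n : ℤ))) ∧
      Summable (fun n : {n : ℕ // p ≤ n} =>
        ‖((-1 : ℂ) ^ ((n : ℕ) + 1) * ((n : ℕ) : ℂ)⁻¹ * z ^ (n : ℕ) *
          ((∑' k, (lam k) ^ (-((n : ℕ) : ℤ)) : ℝ) : ℂ))‖) ∧
      (∏' k, (1 + z / (lam k : ℂ)) *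
          Complex.exp (∑ n ∈ Finset.Icc 1 (p - 1), (-1 : ℂ) ^ n * (n : ℂ)⁻¹ * (z / (lam k : ℂ)) ^ n))
        = Complex.exp (∑' n : {n : ℕ // p ≤ n},
            (-1 : ℂ) ^ ((n : ℕ) + 1) * ((n : ℕ) : ℂ)⁻¹ * z ^ (n : ℕ) *
              ((∑' k, (lam k) ^ (-((n : ℕ) : ℤ)) : ℝ) : ℂ)) :=
  stmt7_general p lam hpos hsum
end

section
/- Let p ≥ 1 be an integer and let (λ_k)_{k∈ℕ} and (μ_k)_{k∈ℕ} be two nondecreasing sequences of positive real numbers tending to +∞ with Σ_k λ_k^{−p} < ∞ and Σ_k μ_k^{−p} < ∞. If Σ_k λ_k^{−n} = Σ_k μ_k^{−n} for every integer n ≥ p, then λ_k = μ_k for every k. -/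
/-!
Pass to the reciprocals `x k = λ_k⁻¹`, `y k = μ_k⁻¹`, which are antitone and nonnegative, and
argue by strong induction on `k`. Once the first `K` terms agree, the tails from `K` on have the
same power sums `Σ x^n`, `n ≥ p`. The largest term dominates the power sums as `n → ∞`:
`x_K ^ n ≤ Σ_{k ≥ K} x_k ^ n ≤ x_K ^ (n - p) Σ_{k ≥ K} x_k ^ p`, so `x_K > y_K` would force
`x_K ^ p ≤ (y_K / x_K) ^ (n - p) Σ_{k ≥ K} y_k ^ p → 0`, which is absurd.
-/

open Filter Topology Finset

section PowerSums

variable {x y : ℕ → ℝ} {p : ℕ}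

lemma pow_add_le_of_antitone (hx : Antitone x) (hx0 : ∀ k, 0 ≤ x k) (m k : ℕ) :
    x k ^ (m + p) ≤ x 0 ^ m * x k ^ p := by
  rw [pow_add]
  exact mul_le_mul_of_nonneg_right (pow_le_pow_left₀ (hx0 k) (hx k.zero_le) m)
    (pow_nonneg (hx0 k) p)

lemma summable_pow_add_of_antitone (hx : Antitone x) (hx0 : ∀ k, 0 ≤ x k)
    (hs : Summable fun k => x k ^ p) (m : ℕ) : Summable fun k => x k ^ (m + p) :=
  (hs.mul_left (x 0 ^ m)).of_nonneg_of_le (fun k => pow_nonneg (hx0 k) _)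
    (pow_add_le_of_antitone hx hx0 m)

lemma tsum_pow_add_le_of_antitone (hx : Antitone x) (hx0 : ∀ k, 0 ≤ x k)
    (hs : Summable fun k => x k ^ p) (m : ℕ) :
    ∑' k, x k ^ (m + p) ≤ x 0 ^ m * ∑' k, x k ^ p := by
  rw [← tsum_mul_left]
  exact (summable_pow_add_of_antitone hx hx0 hs m).tsum_le_tsum
    (pow_add_le_of_antitone hx hx0 m) (hs.mul_left _)

lemma head_le_of_tsum_pow_eq (hx : Antitone x) (hx0 : ∀ k, 0 ≤ x k)
    (hxs : Summable fun k => x k ^ p) (hy : Antitone y) (hy0 : ∀ k, 0 ≤ y k)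
    (hys : Summable fun k => y k ^ p)
    (heq : ∀ m, ∑' k, x k ^ (m + p) = ∑' k, y k ^ (m + p)) : x 0 ≤ y 0 := by
  by_contra! hlt
  have hx0pos : 0 < x 0 := (hy0 0).trans_lt hlt
  set S := ∑' k, y k ^ p
  have hbound : ∀ m, x 0 ^ p ≤ (y 0 / x 0) ^ m * S := fun m => by
    have hdom : x 0 ^ m * x 0 ^ p ≤ y 0 ^ m * S :=
      calc x 0 ^ m * x 0 ^ p = x 0 ^ (m + p) := (pow_add _ _ _).symm
        _ ≤ ∑' k, x k ^ (m + p) :=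
          (summable_pow_add_of_antitone hx hx0 hxs m).le_tsum 0
            fun k _ => pow_nonneg (hx0 k) _
        _ = ∑' k, y k ^ (m + p) := heq m
        _ ≤ y 0 ^ m * S := tsum_pow_add_le_of_antitone hy hy0 hys m
    rw [div_pow, div_mul_eq_mul_div, le_div_iff₀ (by positivity)]
    linarith
  have hlim : Tendsto (fun m => (y 0 / x 0) ^ m * S) atTop (𝓝 0) := by
    simpa using (tendsto_pow_atTop_nhds_zero_of_lt_one (div_nonneg (hy0 0) hx0pos.le)
      ((div_lt_one hx0pos).2 hlt)).mul_const S
  exact (pow_pos hx0pos p).not_ge (ge_of_tendsto' hlim hbound)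

theorem eq_of_tsum_pow_eq (hx : Antitone x) (hx0 : ∀ k, 0 ≤ x k)
    (hxs : Summable fun k => x k ^ p) (hy : Antitone y) (hy0 : ∀ k, 0 ≤ y k)
    (hys : Summable fun k => y k ^ p)
    (heq : ∀ m, ∑' k, x k ^ (m + p) = ∑' k, y k ^ (m + p)) : x = y := by
  funext K
  induction K using Nat.strong_induction_on with | _ K ih => ?_
  have htail : ∀ m, ∑' k, x (k + K) ^ (m + p) = ∑' k, y (k + K) ^ (m + p) := by
    intro m
    have hsplit_x := (summable_pow_add_of_antitone hx hx0 hxs m).sum_add_tsum_nat_add K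
    have hsplit_y := (summable_pow_add_of_antitone hy hy0 hys m).sum_add_tsum_nat_add K
    have hhead : ∑ i ∈ range K, x i ^ (m + p) = ∑ i ∈ range K, y i ^ (m + p) :=
      sum_congr rfl fun i hi => by rw [ih i (mem_range.1 hi)]
    linarith [heq m]
  have hxs' : Summable fun k => x (k + K) ^ p := (summable_nat_add_iff K).2 hxs
  have hys' : Summable fun k => y (k + K) ^ p := (summable_nat_add_iff K).2 hys
  have hx' : Antitone fun k => x (k + K) := hx.comp_monotone (monotone_id.add_const K)
  have hy' : Antitone fun k => y (k + K) := hy.comp_monotone (monotone_id.add_const K)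
  have hxK := head_le_of_tsum_pow_eq hx' (fun _ => hx0 _) hxs' hy' (fun _ => hy0 _) hys' htail
  have hyK := head_le_of_tsum_pow_eq hy' (fun _ => hy0 _) hys' hx' (fun _ => hx0 _) hxs'
    fun m => (htail m).symm
  simp only [zero_add] at hxK hyK
  exact le_antisymm hxK hyK

end PowerSums

lemma antitone_inv_of_monotone {f : ℕ → ℝ} (hf : Monotone f) (hpos : ∀ k, 0 < f k) :
    Antitone fun k => (f k)⁻¹ :=
  fun _ _ hij => inv_anti₀ (hpos _) (hf hij)

lemma zpow_neg_natCast_eq_inv_pow (a : ℝ) (n : ℕ) : a ^ (-(n : ℤ)) = a⁻¹ ^ n := by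
  rw [zpow_neg, zpow_natCast, inv_pow]

theorem stmt9_general (p : ℕ) (lam mu : ℕ → ℝ)
    (hlmono : Monotone lam) (hmmono : Monotone mu)
    (hlpos : ∀ k, 0 < lam k) (hmpos : ∀ k, 0 < mu k)
    (hlsum : Summable fun k => (lam k) ^ (-(p : ℤ)))
    (hmsum : Summable fun k => (mu k) ^ (-(p : ℤ)))
    (heq : ∀ n : ℕ, p ≤ n → (∑' k, (lam k) ^ (-(n : ℤ))) = ∑' k, (mu k) ^ (-(n : ℤ))) :
    lam = mu := by
  simp only [zpow_neg_natCast_eq_inv_pow] at hlsum hmsum heq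
  have hinv : (fun k => (lam k)⁻¹) = fun k => (mu k)⁻¹ :=
    eq_of_tsum_pow_eq (antitone_inv_of_monotone hlmono hlpos) (fun k => inv_nonneg.2 (hlpos k).le)
      hlsum (antitone_inv_of_monotone hmmono hmpos) (fun k => inv_nonneg.2 (hmpos k).le) hmsum
      fun m => heq (m + p) (Nat.le_add_left p m)
  funext k
  exact inv_injective (congrFun hinv k)

/-- Let `p ≥ 1` be an integer and `(λ_k)`, `(μ_k)` two nondecreasing sequences of
positive reals tending to `+∞` with `Σ_k λ_k^(−p) < ∞` and `Σ_k μ_k^(−p) < ∞`.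
If `Σ_k λ_k^(−n) = Σ_k μ_k^(−n)` for every integer `n ≥ p`, then `λ_k = μ_k` for every `k`. -/
theorem stmt9 (p : ℕ) (hp : 1 ≤ p) (lam mu : ℕ → ℝ)
    (hlmono : Monotone lam) (hmmono : Monotone mu)
    (hlpos : ∀ k, 0 < lam k) (hmpos : ∀ k, 0 < mu k)
    (hltend : Filter.Tendsto lam Filter.atTop Filter.atTop)
    (hmtend : Filter.Tendsto mu Filter.atTop Filter.atTop)
    (hlsum : Summable fun k => (lam k) ^ (-(p : ℤ)))
    (hmsum : Summable fun k => (mu k) ^ (-(p : ℤ)))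
    (heq : ∀ n : ℕ, p ≤ n → (∑' k, (lam k) ^ (-(n : ℤ))) = ∑' k, (mu k) ^ (-(n : ℤ))) :
    lam = mu :=
  stmt9_general p lam mu hlmono hmmono hlpos hmpos hlsum hmsum heq
end
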